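/- arXiv:1701.08020 — 2 statements merged into one kernel-verified Lean document; each statement's English description precedes it below -/
import Mathlib

section
/- The group L = ⟨ a, t ∣ (at)³ = a³, [[t,a],t] = a³ ⟩ is infinite: it admits surjections onto groups of arbitrarily large order (for instance, for every r ≥ 2 the quotient L/⟨a^{3^r}⟩ still surjects onto arbitrarily large finite 3-groups, so L itself is infinite). -/
/-!
`L` acts on `ℤ²` through the crystallographic group `p3 = ℤ² ⋊ C₃`: `a` acts as the rotation
`(x, y) ↦ (-y, x - y)` of order 3 and `t` as a translation. Then `a³ = 1`, `at` is again a
rotation of order 3, and `[t, a]` is a translation, hence commutes with `t`; so both relators act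
trivially. The translation `t` has infinite order, so `L` is infinite.
-/

/-- The relations of the presented group
`L = ⟨ a, t ∣ (at)³ = a³, [[t,a],t] = a³ ⟩`, with `a = FreeGroup.of 0`,
`t = FreeGroup.of 1`, and `[x,y] = x⁻¹y⁻¹xy`. -/
def mainlineLimitRels : Set (FreeGroup (Fin 2)) :=
  { ((FreeGroup.of 0 : FreeGroup (Fin 2)) * FreeGroup.of 1) ^ 3 *
      ((FreeGroup.of 0 : FreeGroup (Fin 2)) ^ 3)⁻¹,
    (((FreeGroup.of 1 : FreeGroup (Fin 2))⁻¹ * (FreeGroup.of 0)⁻¹ *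
        FreeGroup.of 1 * FreeGroup.of 0)⁻¹ * (FreeGroup.of 1)⁻¹ *
      ((FreeGroup.of 1)⁻¹ * (FreeGroup.of 0)⁻¹ * FreeGroup.of 1 * FreeGroup.of 0) *
      FreeGroup.of 1) * ((FreeGroup.of 0 : FreeGroup (Fin 2)) ^ 3)⁻¹ }

lemma infinite_of_not_isOfFinOrder_map {G H : Type*} [LeftCancelMonoid G] [Monoid H]
    (f : G →* H) {g : G} (h : ¬IsOfFinOrder (f g)) : Infinite G := by
  by_contra hG
  rw [not_infinite_iff_finite] at hG
  exact h (f.isOfFinOrder (isOfFinOrder_of_finite g))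

def hexRotation : Equiv.Perm (ℤ × ℤ) where
  toFun p := (-p.2, p.1 - p.2)
  invFun p := (p.2 - p.1, -p.1)
  left_inv p := by simp
  right_inv p := by simp

def unitTranslation : Equiv.Perm (ℤ × ℤ) := Equiv.addRight (1, 0)

lemma not_isOfFinOrder_unitTranslation : ¬IsOfFinOrder unitTranslation := by
  rw [isOfFinOrder_iff_pow_eq_one]
  rintro ⟨n, hn, hpow⟩
  have hfirst : ((unitTranslation ^ n) 0).1 = 0 := by rw [hpow]; rfl
  exact hn.ne' (by simpa [unitTranslation] using hfirst)

lemma lift_hexRotation_unitTranslation_eq_one :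
    ∀ r ∈ mainlineLimitRels, FreeGroup.lift ![hexRotation, unitTranslation] r = 1 := by
  rintro r (rfl | rfl) <;>
  · ext ⟨x, y⟩ <;>
    simp [pow_succ, hexRotation, unitTranslation] <;> ring

/-- The group `L = ⟨ a, t ∣ (at)³ = a³, [[t,a],t] = a³ ⟩` is infinite. -/
theorem stmt_9 : Infinite (PresentedGroup mainlineLimitRels) := by
  let toP3 := PresentedGroup.toGroup lift_hexRotation_unitTranslation_eq_one
  have hT : toP3 (PresentedGroup.of 1) = unitTranslation := PresentedGroup.toGroup.of _
  exact infinite_of_not_isOfFinOrder_map toP3 (hT ▸ not_isOfFinOrder_unitTranslation)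
end

section
/- The group L = ⟨ a, t ∣ (at)³ = a³, [[t,a],t] = a³ ⟩ is not nilpotent. -/
open Function

open scoped commutatorElement

section Engel

variable {G : Type*} [Group G]

lemma iterate_commutatorElement_mem_lowerCentralSeries (g x : G) (n : ℕ) :
    (fun y ↦ ⁅y, g⁆)^[n] x ∈ (⊤ : Subgroup G).lowerCentralSeries n := by
  induction n with
  | zero => exact Subgroup.mem_top x
  | succ n ih =>
    rw [iterate_succ_apply']
    exact Subgroup.commutator_mem_commutator ih (Subgroup.mem_top g)

lemma Group.IsNilpotent.eventually_iterate_commutatorElement_eq_one [Group.IsNilpotent G]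
    (g x : G) : ∃ n, ∀ m ≥ n, (fun y ↦ ⁅y, g⁆)^[m] x = 1 := by
  obtain ⟨n, hn⟩ := Subgroup.nilpotent_iff_lowerCentralSeries.mp ‹Group.IsNilpotent G›
  refine ⟨n, fun m hm ↦ ?_⟩
  have hmem := Subgroup.lowerCentralSeries_antitone ⊤ hm
    (iterate_commutatorElement_mem_lowerCentralSeries g x m)
  rwa [hn, Subgroup.mem_bot] at hmem

lemma MonoidHom.eq_one_of_isPeriodicPt_commutatorElement {H : Type*} [Group H]
    [Group.IsNilpotent G] (f : G →* H) {g x : G} {k : ℕ} (hk : 0 < k)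
    (hx : IsPeriodicPt (fun y ↦ ⁅y, f g⁆) k (f x)) : f x = 1 := by
  obtain ⟨n, hn⟩ := Group.IsNilpotent.eventually_iterate_commutatorElement_eq_one g x
  have hsemiconj : Semiconj f (fun y ↦ ⁅y, g⁆) (fun y ↦ ⁅y, f g⁆) :=
    fun y ↦ map_commutatorElement f y g
  calc f x = (fun y ↦ ⁅y, f g⁆)^[k * n] (f x) := ((hx.mul_const n).eq).symm
    _ = f ((fun y ↦ ⁅y, g⁆)^[k * n] x) := (hsemiconj.iterate_right (k * n) x).symm
    _ = 1 := by rw [hn _ (Nat.le_mul_of_pos_left n hk), map_one]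

end Engel

def mainlineLimitGenImage : Fin 2 → Equiv.Perm (Fin 4) :=
  ![Equiv.swap 1 3 * Equiv.swap 1 2, Equiv.swap 0 1 * Equiv.swap 2 3]

lemma mainlineLimitGenImage_rels :
    ∀ r ∈ mainlineLimitRels, FreeGroup.lift mainlineLimitGenImage r = 1 := by
  rintro r (rfl | rfl) <;>
    simp only [map_mul, map_inv, map_pow, FreeGroup.lift_apply_of] <;> decide

def mainlineLimitToPerm : PresentedGroup mainlineLimitRels →* Equiv.Perm (Fin 4) :=
  PresentedGroup.toGroup mainlineLimitGenImage_rels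

lemma mainlineLimitToPerm_of (i : Fin 2) :
    mainlineLimitToPerm (.of i) = mainlineLimitGenImage i :=
  PresentedGroup.toGroup.of mainlineLimitGenImage_rels

set_option maxRecDepth 2000 in
lemma isPeriodicPt_commutatorElement_mainlineLimitGenImage :
    IsPeriodicPt (fun y ↦ ⁅y, mainlineLimitGenImage 0⁆) 3 (mainlineLimitGenImage 1) := by
  decide

/-- The group `L = ⟨ a, t ∣ (at)³ = a³, [[t,a],t] = a³ ⟩` is not nilpotent. -/
theorem stmt_10 : ¬ Group.IsNilpotent (PresentedGroup mainlineLimitRels) := by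
  intro hL
  have hcycle := isPeriodicPt_commutatorElement_mainlineLimitGenImage
  rw [← mainlineLimitToPerm_of, ← mainlineLimitToPerm_of] at hcycle
  have hone := mainlineLimitToPerm.eq_one_of_isPeriodicPt_commutatorElement three_pos hcycle
  rw [mainlineLimitToPerm_of] at hone
  exact absurd hone (by decide)
end
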